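/- Let P be a labeled poset on [p] and s : [p] → ℤ₊. Then, as formal power series in x₁,…,x_p, y₁,…,y_p, one has G_{(P,s)}(x,y) = ∑_{τ=(π,r) ∈ L(P,s)} y^{r+𝟏} · (∏_{i ∈ D₃(τ)} x_{π_{i+1}} ⋯ x_{π_p}) · ∏_{i ∈ [p]} (1 − x_{π_i} x_{π_{i+1}} ⋯ x_{π_p})^{−1}, where 𝟏 = (1,…,1). -/

import Mathlib

open scoped Classical

noncomputable section

/-- `f : Fin p → ℕ` is a lecture hall `(P,s)`-partition: labels are compared via the
usual order on `Fin p`. -/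
def IsLHPart {p : ℕ} (P : PartialOrder (Fin p)) (s : Fin p → ℕ) (f : Fin p → ℕ) : Prop :=
  (∀ x y, P.lt x y → (f x : ℚ) / (s x : ℚ) ≤ (f y : ℚ) / (s y : ℚ)) ∧
  ∀ x y, P.lt x y → y < x → (f x : ℚ) / (s x : ℚ) < (f y : ℚ) / (s y : ℚ)

/-- The set of linear extensions (Jordan–Hölder set) of a labeled poset. -/
def LinExt {p : ℕ} (P : PartialOrder (Fin p)) : Set (Equiv.Perm (Fin p)) :=
  {π | ∀ i j, P.le (π i) (π j) → i ≤ j}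

/-- The set `L(P,s)` of `s`-colored permutations `(π, r)` with `π ∈ L(P)`. -/
def LPs {p : ℕ} (P : PartialOrder (Fin p)) (s : Fin p → ℕ) :
    Finset (Equiv.Perm (Fin p) × (∀ x : Fin p, Fin (s x))) :=
  Finset.univ.filter fun τ => τ.1 ∈ LinExt P

/-- Descent of `τ = (π,r)` at (1-based) position `i`. -/
def IsDesc {p : ℕ} (s : Fin p → ℕ) (π : Equiv.Perm (Fin p)) (r : Fin p → ℕ) (i : ℕ) : Prop :=
  ∃ (h1 : i - 1 < p) (h2 : i < p),
    ((π ⟨i - 1, h1⟩ < π ⟨i, h2⟩ ∧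
      (r (π ⟨i - 1, h1⟩) : ℚ) / (s (π ⟨i - 1, h1⟩) : ℚ) >
        (r (π ⟨i, h2⟩) : ℚ) / (s (π ⟨i, h2⟩) : ℚ)) ∨
    (π ⟨i, h2⟩ < π ⟨i - 1, h1⟩ ∧
      (r (π ⟨i - 1, h1⟩) : ℚ) / (s (π ⟨i - 1, h1⟩) : ℚ) ≥
        (r (π ⟨i, h2⟩) : ℚ) / (s (π ⟨i, h2⟩) : ℚ)))

/-- The descent set `D₁(τ) ⊆ [p-1]`. -/
def D1 {p : ℕ} (s : Fin p → ℕ) (π : Equiv.Perm (Fin p)) (r : Fin p → ℕ) : Finset ℕ :=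
  (Finset.Icc 1 (p - 1)).filter (IsDesc s π r)

/-- The descent set `D₃(τ)`: descents of `(π, r + 1)` (i.e. using `(r(x)+1)/s(x)`). -/
def D3 {p : ℕ} (s : Fin p → ℕ) (π : Equiv.Perm (Fin p)) (r : Fin p → ℕ) : Finset ℕ :=
  D1 s π fun x => r x + 1

/-- `D₂(τ) = D₁(τ) ∪ {0}` if `r(π₁) = 0`, else `D₁(τ)`. -/
def D2 {p : ℕ} (hp : 0 < p) (s : Fin p → ℕ) (π : Equiv.Perm (Fin p)) (r : Fin p → ℕ) :
    Finset ℕ :=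
  if r (π ⟨0, hp⟩) = 0 then insert 0 (D1 s π r) else D1 s π r

/-- `D(τ) = D₁(τ) ∪ {p}` if `r(π_p) > 0`, else `D₁(τ)`. -/
def Dfull {p : ℕ} (hp : 0 < p) (s : Fin p → ℕ) (π : Equiv.Perm (Fin p)) (r : Fin p → ℕ) :
    Finset ℕ :=
  if r (π ⟨p - 1, Nat.sub_lt hp Nat.one_pos⟩) = 0 then D1 s π r else insert p (D1 s π r)

/-- `D₄(τ) = D₂(τ) ∪ {p}` if `r(π_p) > 0`, else `D₂(τ)`. -/
def D4 {p : ℕ} (hp : 0 < p) (s : Fin p → ℕ) (π : Equiv.Perm (Fin p)) (r : Fin p → ℕ) :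
    Finset ℕ :=
  if r (π ⟨p - 1, Nat.sub_lt hp Nat.one_pos⟩) = 0 then D2 hp s π r
  else insert p (D2 hp s π r)

/-- `x_{π_{i+1}} ⋯ x_{π_p}` as a monomial in `MvPowerSeries (Fin p ⊕ Fin p) ℚ`
(`Sum.inl` indexes the `x`-variables, `Sum.inr` the `y`-variables); here `i` is the
number of leading positions omitted, so `i = 0` gives `x_{π_1} ⋯ x_{π_p}` and `i = p`
gives the empty product `1`. -/
def xprod {p : ℕ} (π : Equiv.Perm (Fin p)) (i : ℕ) : MvPowerSeries (Fin p ⊕ Fin p) ℚ :=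
  ∏ j ∈ Finset.univ.filter fun j : Fin p => i ≤ (j : ℕ),
    MvPowerSeries.X (Sum.inl (π j))

/-- The monomial `y^r`. -/
def yprod {p : ℕ} (r : Fin p → ℕ) : MvPowerSeries (Fin p ⊕ Fin p) ℚ :=
  ∏ x : Fin p, MvPowerSeries.X (Sum.inr x) ^ r x



open MvPowerSeries Finsupp
variable {p : ℕ}

/-- exponent of `xprod π i` -/
def mdeg (π : Equiv.Perm (Fin p)) (i : ℕ) : (Fin p ⊕ Fin p) →₀ ℕ :=
  ∑ j ∈ Finset.univ.filter fun j : Fin p => i ≤ (j : ℕ),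
    Finsupp.single (Sum.inl (π j)) 1

lemma prod_monomial_one {σ ι : Type*} (t : Finset ι) (u : ι → (σ →₀ ℕ)) :
    (∏ i ∈ t, MvPowerSeries.monomial (R := ℚ) (u i) 1) = MvPowerSeries.monomial (R := ℚ) (∑ i ∈ t, u i) 1 := by
  classical
  induction t using Finset.induction with
  | empty => simp [MvPowerSeries.monomial_zero_one]
  | insert _ _ h ih =>
      rw [Finset.prod_insert h, Finset.sum_insert h, ih, MvPowerSeries.monomial_mul_monomial, one_mul]

lemma xprod_eq (π : Equiv.Perm (Fin p)) (i : ℕ) :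
    xprod π i = MvPowerSeries.monomial (R := ℚ) (mdeg π i) 1 := by
  rw [xprod, mdeg, ← prod_monomial_one]
  refine Finset.prod_congr rfl fun j _ => ?_
  rw [MvPowerSeries.X, MvPowerSeries.monomial]

lemma mdeg_apply_inl (π : Equiv.Perm (Fin p)) (i : ℕ) (x : Fin p) :
    mdeg π i (Sum.inl x) = if i ≤ (π.symm x : ℕ) then 1 else 0 := by
  rw [mdeg, Finset.sum_apply']
  have h : ∀ j : Fin p, (Finsupp.single (Sum.inl (π j)) 1 : (Fin p ⊕ Fin p) →₀ ℕ) (Sum.inl x)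
      = if π.symm x = j then 1 else 0 := by
    intro j
    rw [Finsupp.single_apply]
    by_cases hj : π.symm x = j
    · subst hj; simp
    · rw [if_neg, if_neg hj]
      intro hc
      exact hj (by rw [← Sum.inl.inj hc]; simp)
  rw [Finset.sum_congr rfl fun j _ => h j, Finset.sum_ite_eq]
  simp

lemma mdeg_apply_pi (π : Equiv.Perm (Fin p)) (i : ℕ) (j : Fin p) :
    mdeg π i (Sum.inl (π j)) = if i ≤ (j : ℕ) then 1 else 0 := by
  rw [mdeg_apply_inl]; simp

lemma mdeg_apply_inr (π : Equiv.Perm (Fin p)) (i : ℕ) (x : Fin p) :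
    mdeg π i (Sum.inr x) = 0 := by
  rw [mdeg, Finset.sum_apply']
  refine Finset.sum_eq_zero fun j _ => ?_
  rw [Finsupp.single_apply, if_neg (by simp)]

lemma mdeg_ne_zero (π : Equiv.Perm (Fin p)) (i : ℕ) (hi : i < p) : mdeg π i ≠ 0 := by
  intro h
  have h2 := mdeg_apply_pi π i ⟨i, hi⟩
  rw [h, if_pos (le_refl i)] at h2
  simp at h2


lemma monomial_pow_one {σ : Type*} (m : σ →₀ ℕ) (n : ℕ) :
    (MvPowerSeries.monomial (R := ℚ) m 1) ^ n = MvPowerSeries.monomial (R := ℚ) (n • m) 1 := by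
  induction n with
  | zero => simp [MvPowerSeries.monomial_zero_one]
  | succ n ih => rw [pow_succ, ih, MvPowerSeries.monomial_mul_monomial, one_mul, succ_nsmul]

lemma finsupp_apply_le_sum {σ : Type*} (e : σ →₀ ℕ) (x : σ) : e x ≤ e.sum fun _ k => k := by
  by_cases hx : x ∈ e.support
  · exact Finset.single_le_sum (fun i _ => Nat.zero_le _) hx
  · simp [Finsupp.notMem_support_iff.mp hx]

/-- Key geometric-series coefficient extraction. -/
lemma coeff_geom_mul {σ : Type*} (m : σ →₀ ℕ) (hm : m ≠ 0) (ψ : MvPowerSeries σ ℚ) (e : σ →₀ ℕ) :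
    MvPowerSeries.coeff e ((1 - MvPowerSeries.monomial (R := ℚ) m 1)⁻¹ * ψ) =
      ∑ n ∈ Finset.range ((e.sum fun _ k => k) + 1),
        if n • m ≤ e then MvPowerSeries.coeff (e - n • m) ψ else 0 := by
  set g : MvPowerSeries σ ℚ := MvPowerSeries.monomial (R := ℚ) m 1 with hg
  have hconst : MvPowerSeries.constantCoeff (1 - g) ≠ 0 := by
    have : MvPowerSeries.constantCoeff g = 0 := by
      rw [hg, ← MvPowerSeries.coeff_zero_eq_constantCoeff, MvPowerSeries.coeff_monomial]
      simp [Ne.symm hm]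
    simp [this]
  set N := (e.sum fun _ k => k) + 1 with hN
  have hgeo : (1 - g) * (∑ n ∈ Finset.range N, g ^ n) = 1 - g ^ N := by
    have := mul_geom_sum (g : MvPowerSeries σ ℚ) N
    have h2 : (1 - g) * (∑ n ∈ Finset.range N, g ^ n) = -((g - 1) * ∑ n ∈ Finset.range N, g ^ n) := by
      ring
    rw [h2, this]; ring
  have hinv : (1 - g)⁻¹ = (∑ n ∈ Finset.range N, g ^ n) + g ^ N * (1 - g)⁻¹ := by
    have h1 : (1 - g)⁻¹ * ((1 - g) * (∑ n ∈ Finset.range N, g ^ n) + g ^ N) = (1 - g)⁻¹ := by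
      rw [hgeo]; ring_nf
    calc (1 - g)⁻¹ = (1 - g)⁻¹ * ((1 - g) * (∑ n ∈ Finset.range N, g ^ n) + g ^ N) := h1.symm
      _ = ((1 - g)⁻¹ * (1 - g)) * (∑ n ∈ Finset.range N, g ^ n) + g ^ N * (1 - g)⁻¹ := by ring
      _ = (∑ n ∈ Finset.range N, g ^ n) + g ^ N * (1 - g)⁻¹ := by
          rw [MvPowerSeries.inv_mul_cancel _ hconst, one_mul]
  rw [hinv, add_mul, map_add]
  have hrem : MvPowerSeries.coeff e (g ^ N * ((1 - g)⁻¹ * ψ)) = 0 := by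
    rw [monomial_pow_one, MvPowerSeries.coeff_monomial_mul]
    have : ¬ (N • m ≤ e) := by
      intro hle
      obtain ⟨x, hx⟩ : ∃ x, m x ≠ 0 := by
        by_contra h
        push_neg at h
        exact hm (Finsupp.ext fun x => h x)
      have h1 : N * m x ≤ e x := by simpa using hle x
      have h2 : e x ≤ e.sum fun _ k => k := finsupp_apply_le_sum e x
      have h3 : N ≤ N * m x := Nat.le_mul_of_pos_right N (Nat.pos_of_ne_zero hx)
      omega
    rw [if_neg this]
  rw [mul_assoc, hrem, add_zero, Finset.sum_mul, map_sum]
  refine Finset.sum_congr rfl fun n _ => ?_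
  rw [monomial_pow_one, MvPowerSeries.coeff_monomial_mul]
  split <;> simp

/-- condition for a nonzero coefficient of the tail product starting at position `k` -/
def Hcond (π : Equiv.Perm (Fin p)) (k : ℕ) (e : (Fin p ⊕ Fin p) →₀ ℕ) : Prop :=
  (∀ x : Fin p, e (Sum.inr x) = 0) ∧
  (∀ j : Fin p, (j : ℕ) < k → e (Sum.inl (π j)) = 0) ∧
  (∀ j1 j2 : Fin p, k ≤ (j1 : ℕ) → (j1 : ℕ) ≤ (j2 : ℕ) →
    e (Sum.inl (π j1)) ≤ e (Sum.inl (π j2)))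

lemma coeff_Hprod_base (π : Equiv.Perm (Fin p)) (k : ℕ) (hk : p ≤ k)
    (e : (Fin p ⊕ Fin p) →₀ ℕ) :
    MvPowerSeries.coeff e
      (∏ i ∈ Finset.univ.filter fun i : Fin p => k ≤ (i : ℕ), (1 - xprod π (i : ℕ))⁻¹) =
    if Hcond π k e then 1 else 0 := by
  have hempty : (Finset.univ.filter fun i : Fin p => k ≤ (i : ℕ)) = ∅ := by
    refine Finset.eq_empty_of_forall_notMem fun i hi => ?_
    simp only [Finset.mem_filter] at hi
    exact absurd hi.2 (Nat.not_le.mpr (lt_of_lt_of_le i.isLt hk))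
  rw [hempty, Finset.prod_empty, MvPowerSeries.coeff_one]
  congr 1
  rw [eq_iff_iff]
  constructor
  · rintro rfl; exact ⟨fun _ => rfl, fun _ _ => rfl, fun _ _ _ _ => le_refl _⟩
  · rintro ⟨h1, h2, _⟩
    ext y
    rcases y with x | x
    · have := h2 (π.symm x) (lt_of_lt_of_le (π.symm x).isLt hk)
      simpa using this
    · exact h1 x

lemma coeff_Hprod_aux (π : Equiv.Perm (Fin p)) :
    ∀ (n k : ℕ), p - k ≤ n → ∀ e : (Fin p ⊕ Fin p) →₀ ℕ,
    MvPowerSeries.coeff e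
      (∏ i ∈ Finset.univ.filter fun i : Fin p => k ≤ (i : ℕ), (1 - xprod π (i : ℕ))⁻¹) =
    if Hcond π k e then 1 else 0 := by
  intro n
  induction n with
  | zero => intro k hk e; exact coeff_Hprod_base π k (by omega) e
  | succ n ih =>
    intro k hk e
    by_cases hkp : p ≤ k
    · exact coeff_Hprod_base π k hkp e
    push_neg at hkp
    -- split off the factor at position k
    have hsplit : (Finset.univ.filter fun i : Fin p => k ≤ (i : ℕ)) =
        insert ⟨k, hkp⟩ (Finset.univ.filter fun i : Fin p => k + 1 ≤ (i : ℕ)) := by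
      ext i
      simp only [Finset.mem_filter, Finset.mem_univ, true_and, Finset.mem_insert, Fin.ext_iff]
      omega
    have hnot : (⟨k, hkp⟩ : Fin p) ∉ Finset.univ.filter fun i : Fin p => k + 1 ≤ (i : ℕ) := by
      simp
    rw [hsplit, Finset.prod_insert hnot]
    have hm : mdeg π k ≠ 0 := mdeg_ne_zero π k hkp
    rw [show ((⟨k, hkp⟩ : Fin p) : ℕ) = k from rfl, xprod_eq, coeff_geom_mul _ hm]
    set qk := e (Sum.inl (π ⟨k, hkp⟩)) with hqk
    have key : ∀ n' : ℕ,
        (if n' • mdeg π k ≤ e then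
          MvPowerSeries.coeff (e - n' • mdeg π k)
            (∏ i ∈ Finset.univ.filter fun i : Fin p => k + 1 ≤ (i : ℕ), (1 - xprod π (i : ℕ))⁻¹)
         else 0) =
        if n' = qk ∧ Hcond π k e then 1 else 0 := by
      intro n'
      rw [ih (k+1) (by omega)]
      have hle : n' • mdeg π k ≤ e ↔ ∀ j : Fin p, k ≤ (j : ℕ) → n' ≤ e (Sum.inl (π j)) := by
        rw [Finsupp.le_def]
        constructor
        · intro h j hj
          have := h (Sum.inl (π j))
          rwa [Finsupp.smul_apply, mdeg_apply_pi, if_pos hj, smul_eq_mul, mul_one] at this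
        · intro h y
          rcases y with x | x
          · rw [Finsupp.smul_apply, mdeg_apply_inl, smul_eq_mul]
            by_cases hx : k ≤ (π.symm x : ℕ)
            · rw [if_pos hx, mul_one]
              have := h (π.symm x) hx
              simpa using this
            · simp [hx]
          · simp [Finsupp.smul_apply, mdeg_apply_inr]
      have happly_inl : ∀ (hyp : n' • mdeg π k ≤ e) (j : Fin p),
          (e - n' • mdeg π k) (Sum.inl (π j)) =
            e (Sum.inl (π j)) - (if k ≤ (j : ℕ) then n' else 0) := by
        intro _ j
        rw [Finsupp.tsub_apply, Finsupp.smul_apply, mdeg_apply_pi, smul_eq_mul]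
        split <;> simp
      have happly_inr : ∀ (x : Fin p),
          (e - n' • mdeg π k) (Sum.inr x) = e (Sum.inr x) := by
        intro x
        rw [Finsupp.tsub_apply, Finsupp.smul_apply, mdeg_apply_inr]
        simp
      have hiff : (n' • mdeg π k ≤ e ∧ Hcond π (k+1) (e - n' • mdeg π k)) ↔
          (n' = qk ∧ Hcond π k e) := by
        constructor
        · rintro ⟨h1, h2⟩
          have hall : ∀ j : Fin p, k ≤ (j : ℕ) → n' ≤ e (Sum.inl (π j)) := hle.mp h1
          obtain ⟨c1, c2, c3⟩ := h2
          have hn' : n' = qk := by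
            have hz := c2 ⟨k, hkp⟩ (by simp)
            rw [happly_inl h1] at hz
            simp only [if_pos (le_refl k)] at hz
            have := hall ⟨k, hkp⟩ (le_refl k)
            omega
          refine ⟨hn', fun x => by rw [← happly_inr x]; exact c1 x, ?_, ?_⟩
          · intro j hj
            have := c2 j (by omega)
            rw [happly_inl h1, if_neg (by omega)] at this
            exact this
          · intro j1 j2 hj1 hj12
            by_cases hj1k : k + 1 ≤ (j1 : ℕ)
            · have := c3 j1 j2 hj1k hj12
              rw [happly_inl h1, happly_inl h1, if_pos (by omega), if_pos (by omega)] at this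
              have e1 := hall j1 (by omega)
              have e2 := hall j2 (by omega)
              omega
            · have hj1e : (j1 : ℕ) = k := by omega
              have : j1 = ⟨k, hkp⟩ := Fin.ext hj1e
              subst this
              rw [← hqk, ← hn']
              exact hall j2 (by omega)
        · rintro ⟨hn', c1, c2, c3⟩
          have hall : ∀ j : Fin p, k ≤ (j : ℕ) → n' ≤ e (Sum.inl (π j)) := by
            intro j hj
            rw [hn', hqk]
            exact c3 ⟨k, hkp⟩ j (le_refl k) hj
          have h1 : n' • mdeg π k ≤ e := hle.mpr hall
          refine ⟨h1, fun x => by rw [happly_inr x]; exact c1 x, ?_, ?_⟩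
          · intro j hj
            rw [happly_inl h1]
            by_cases hjk : (j : ℕ) < k
            · rw [if_neg (by omega), c2 j hjk]
            · have : j = ⟨k, hkp⟩ := Fin.ext (show (j : ℕ) = k by omega)
              subst this
              rw [if_pos (le_refl k), ← hqk, hn']
              omega
          · intro j1 j2 hj1 hj12
            rw [happly_inl h1, happly_inl h1, if_pos (by omega), if_pos (by omega)]
            have := c3 j1 j2 (by omega) hj12
            have := hall j1 (by omega)
            omega
      by_cases hA : n' • mdeg π k ≤ e
      · by_cases hB : Hcond π (k+1) (e - n' • mdeg π k)
        · rw [if_pos hA, if_pos hB, if_pos (hiff.mp ⟨hA, hB⟩)]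
        · rw [if_pos hA, if_neg hB, if_neg (fun h => hB (hiff.mpr h).2)]
      · rw [if_neg hA, if_neg (fun h => hA (hiff.mpr h).1)]
    rw [Finset.sum_congr rfl fun n' _ => key n']
    by_cases hC : Hcond π k e
    · rw [Finset.sum_congr rfl (fun n' _ => by rw [if_congr (and_iff_left hC) rfl rfl]),
        Finset.sum_ite_eq' (Finset.range ((e.sum fun _ c => c) + 1)) qk (fun _ => (1:ℚ))]
      rw [if_pos (Finset.mem_range.mpr (by
        have := finsupp_apply_le_sum e (Sum.inl (π ⟨k, hkp⟩))
        omega)), if_pos hC]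
    · rw [if_neg hC, Finset.sum_eq_zero]
      intro n' _
      rw [if_neg (by tauto)]

/-- exponent of `yprod r` -/
def yexp (r : Fin p → ℕ) : (Fin p ⊕ Fin p) →₀ ℕ :=
  ∑ x : Fin p, Finsupp.single (Sum.inr x) (r x)

lemma yprod_eq (r : Fin p → ℕ) : yprod r = MvPowerSeries.monomial (R := ℚ) (yexp r) 1 := by
  rw [yprod, yexp, ← prod_monomial_one]
  exact Finset.prod_congr rfl fun x _ => MvPowerSeries.X_pow_eq _ _

lemma yexp_apply_inr (r : Fin p → ℕ) (x : Fin p) : yexp r (Sum.inr x) = r x := by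
  rw [yexp, Finset.sum_apply']
  rw [Finset.sum_eq_single x (fun x' _ hx' => by
    rw [Finsupp.single_apply, if_neg (fun hc => hx' (Sum.inr.inj hc))]) (by simp)]
  simp

lemma yexp_apply_inl (r : Fin p → ℕ) (x : Fin p) : yexp r (Sum.inl x) = 0 := by
  rw [yexp, Finset.sum_apply']
  exact Finset.sum_eq_zero fun x' _ => by rw [Finsupp.single_apply, if_neg (by simp)]

/-- number of descents at positions `≤ j` -/
def acnt (D : Finset ℕ) (j : ℕ) : ℕ := (D.filter fun i => i ≤ j).card

lemma M_apply_inl (π : Equiv.Perm (Fin p)) (D : Finset ℕ) (j : Fin p) :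
    (∑ i ∈ D, mdeg π i) (Sum.inl (π j)) = acnt D (j : ℕ) := by
  rw [Finset.sum_apply']
  rw [Finset.sum_congr rfl fun i _ => mdeg_apply_pi π i j, acnt, Finset.card_filter]

lemma M_apply_inr (π : Equiv.Perm (Fin p)) (D : Finset ℕ) (x : Fin p) :
    (∑ i ∈ D, mdeg π i) (Sum.inr x) = 0 := by
  rw [Finset.sum_apply']
  exact Finset.sum_eq_zero fun i _ => mdeg_apply_inr π i x

lemma acnt_zero {D : Finset ℕ} (hD : ∀ i ∈ D, 1 ≤ i) : acnt D 0 = 0 := by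
  rw [acnt, Finset.card_eq_zero]
  refine Finset.eq_empty_of_forall_notMem fun i hi => ?_
  simp only [Finset.mem_filter] at hi
  have := hD i hi.1
  omega

lemma acnt_succ (D : Finset ℕ) (j : ℕ) :
    acnt D (j + 1) = acnt D j + (if (j + 1) ∈ D then 1 else 0) := by
  by_cases h : (j + 1) ∈ D
  · rw [if_pos h, acnt, acnt]
    have : D.filter (fun i => i ≤ j + 1) = insert (j + 1) (D.filter fun i => i ≤ j) := by
      ext i
      simp only [Finset.mem_filter, Finset.mem_insert]
      constructor
      · rintro ⟨hi, hle⟩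
        rcases Nat.lt_or_ge i (j+1) with h'|h'
        · exact Or.inr ⟨hi, by omega⟩
        · exact Or.inl (by omega)
      · rintro (rfl | ⟨hi, hle⟩)
        · exact ⟨h, le_refl _⟩
        · exact ⟨hi, by omega⟩
    rw [this, Finset.card_insert_of_notMem (by simp)]
  · rw [if_neg h, add_zero, acnt, acnt]
    congr 1
    ext i
    simp only [Finset.mem_filter]
    constructor
    · rintro ⟨hi, hle⟩
      refine ⟨hi, ?_⟩
      have hne : i ≠ j + 1 := fun hij => h (hij ▸ hi)
      omega
    · rintro ⟨hi, hle⟩; exact ⟨hi, by omega⟩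

lemma acnt_mono (D : Finset ℕ) {j1 j2 : ℕ} (h : j1 ≤ j2) : acnt D j1 ≤ acnt D j2 :=
  Finset.card_le_card (by
    intro i hi
    simp only [Finset.mem_filter] at *
    exact ⟨hi.1, le_trans hi.2 h⟩)

/-- adjacent increments give monotonicity on `Fin p` -/
lemma fin_adj_mono {α : Type*} [Preorder α] {u : Fin p → α}
    (h : ∀ (j : ℕ) (hj : j + 1 < p), u ⟨j, by omega⟩ ≤ u ⟨j + 1, hj⟩) :
    ∀ j1 j2 : Fin p, (j1 : ℕ) ≤ (j2 : ℕ) → u j1 ≤ u j2 := by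
  have key : ∀ (n : ℕ) (hn : n < p) (j1 : Fin p), (j1 : ℕ) ≤ n → u j1 ≤ u ⟨n, hn⟩ := by
    intro n
    induction n with
    | zero =>
      intro hn j1 hj1
      have : j1 = ⟨0, hn⟩ := Fin.ext (show (j1 : ℕ) = 0 by omega)
      rw [this]
    | succ n ih =>
      intro hn j1 hj1
      rcases Nat.lt_or_ge (j1 : ℕ) (n + 1) with h' | h'
      · exact le_trans (ih (by omega) j1 (by omega)) (h n hn)
      · have : j1 = ⟨n + 1, hn⟩ := Fin.ext (show (j1 : ℕ) = n + 1 by omega)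
        rw [this]
  intro j1 j2 h12
  have := key (j2 : ℕ) j2.isLt j1 h12
  rwa [Fin.eta] at this

/-- compatibility of `d` with the colored permutation `(π, rr)` -/
def TCond (s : Fin p → ℕ) (π : Equiv.Perm (Fin p)) (rr : Fin p → ℕ)
    (d : (Fin p ⊕ Fin p) →₀ ℕ) : Prop :=
  (∀ x : Fin p, d (Sum.inr x) = rr x + 1) ∧
  (∀ (j : ℕ) (hj : j + 1 < p),
    d (Sum.inl (π ⟨j, by omega⟩)) + (if (j + 1) ∈ D3 s π rr then 1 else 0) ≤
      d (Sum.inl (π ⟨j + 1, hj⟩)))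

lemma D3_one_le {s : Fin p → ℕ} {π : Equiv.Perm (Fin p)} {rr : Fin p → ℕ} :
    ∀ i ∈ D3 s π rr, 1 ≤ i := by
  intro i hi
  rw [D3, D1, Finset.mem_filter, Finset.mem_Icc] at hi
  exact hi.1.1

lemma coeff_term (s : Fin p → ℕ) (π : Equiv.Perm (Fin p)) (rr : Fin p → ℕ)
    (d : (Fin p ⊕ Fin p) →₀ ℕ) :
    MvPowerSeries.coeff d
      (yprod (fun x => rr x + 1) * (∏ i ∈ D3 s π rr, xprod π i) *
        ∏ i : Fin p, (1 - xprod π (i : ℕ))⁻¹) =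
    if TCond s π rr d then 1 else 0 := by
  set W : (Fin p ⊕ Fin p) →₀ ℕ := yexp (fun x => rr x + 1) + ∑ i ∈ D3 s π rr, mdeg π i with hW
  have hWinr : ∀ x, W (Sum.inr x) = rr x + 1 := by
    intro x
    rw [hW, Finsupp.add_apply, yexp_apply_inr, M_apply_inr, add_zero]
  have hWinl : ∀ j : Fin p, W (Sum.inl (π j)) = acnt (D3 s π rr) (j : ℕ) := by
    intro j
    rw [hW, Finsupp.add_apply, yexp_apply_inl, M_apply_inl, zero_add]
  have hmon : yprod (fun x => rr x + 1) * (∏ i ∈ D3 s π rr, xprod π i) =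
      MvPowerSeries.monomial (R := ℚ) W 1 := by
    rw [yprod_eq, Finset.prod_congr rfl fun i _ => xprod_eq π i, prod_monomial_one,
      MvPowerSeries.monomial_mul_monomial, one_mul]
  have hfull : (∏ i : Fin p, (1 - xprod π (i : ℕ))⁻¹) =
      ∏ i ∈ Finset.univ.filter fun i : Fin p => 0 ≤ (i : ℕ), (1 - xprod π (i : ℕ))⁻¹ := by
    congr 1
    rw [Finset.filter_true_of_mem fun i _ => Nat.zero_le _]
  rw [hmon, hfull, MvPowerSeries.coeff_monomial_mul, one_mul]
  by_cases hWd : W ≤ d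
  · rw [if_pos hWd, coeff_Hprod_aux π p 0 (by omega)]
    congr 1
    rw [eq_iff_iff]
    have hsub_inr : ∀ x, (d - W) (Sum.inr x) = d (Sum.inr x) - (rr x + 1) := by
      intro x; rw [Finsupp.tsub_apply, hWinr]
    have hsub_inl : ∀ j : Fin p, (d - W) (Sum.inl (π j)) =
        d (Sum.inl (π j)) - acnt (D3 s π rr) (j : ℕ) := by
      intro j; rw [Finsupp.tsub_apply, hWinl]
    have hWd' := Finsupp.le_def.mp hWd
    constructor
    · rintro ⟨c1, _, c3⟩
      constructor
      · intro x
        have h1 := c1 x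
        rw [hsub_inr] at h1
        have h2 := hWd' (Sum.inr x)
        rw [hWinr] at h2
        omega
      · intro j hj
        have hadj := c3 ⟨j, by omega⟩ ⟨j + 1, hj⟩ (Nat.zero_le _) (by simp)
        rw [hsub_inl, hsub_inl] at hadj
        have ha1 := hWd' (Sum.inl (π ⟨j, by omega⟩))
        have ha2 := hWd' (Sum.inl (π ⟨j + 1, hj⟩))
        rw [hWinl] at ha1 ha2
        have hstep := acnt_succ (D3 s π rr) j
        simp only [Fin.val_mk] at hadj ha1 ha2 ⊢
        omega
    · rintro ⟨c1, c2⟩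
      have haq : ∀ j : Fin p, acnt (D3 s π rr) (j : ℕ) ≤ d (Sum.inl (π j)) := by
        have key : ∀ (n : ℕ) (hn : n < p),
            acnt (D3 s π rr) n ≤ d (Sum.inl (π ⟨n, hn⟩)) := by
          intro n
          induction n with
          | zero => intro hn; rw [acnt_zero D3_one_le]; exact Nat.zero_le _
          | succ n ih =>
            intro hn
            have h1 := ih (by omega)
            have h2 := c2 n hn
            have h3 := acnt_succ (D3 s π rr) n
            omega
        intro j
        have := key (j : ℕ) j.isLt
        rwa [Fin.eta] at this
      refine ⟨?_, fun j hj => absurd hj (by omega), ?_⟩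
      · intro x
        rw [hsub_inr, c1 x]
        omega
      · have hadj : ∀ (j : ℕ) (hj : j + 1 < p),
            (d - W) (Sum.inl (π ⟨j, by omega⟩)) ≤ (d - W) (Sum.inl (π ⟨j + 1, hj⟩)) := by
          intro j hj
          rw [hsub_inl, hsub_inl]
          have h2 := c2 j hj
          have h3 := acnt_succ (D3 s π rr) j
          have h4 := haq ⟨j, by omega⟩
          simp only [Fin.val_mk] at *
          omega
        intro j1 j2 _ h12
        exact fin_adj_mono (u := fun j => (d - W) (Sum.inl (π j))) hadj j1 j2 h12
  · rw [if_neg hWd, if_neg]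
    rintro ⟨c1, c2⟩
    apply hWd
    rw [Finsupp.le_def]
    have haq : ∀ j : Fin p, acnt (D3 s π rr) (j : ℕ) ≤ d (Sum.inl (π j)) := by
      have key : ∀ (n : ℕ) (hn : n < p),
          acnt (D3 s π rr) n ≤ d (Sum.inl (π ⟨n, hn⟩)) := by
        intro n
        induction n with
        | zero => intro hn; rw [acnt_zero D3_one_le]; exact Nat.zero_le _
        | succ n ih =>
          intro hn
          have h1 := ih (by omega)
          have h2 := c2 n hn
          have h3 := acnt_succ (D3 s π rr) n
          omega
      intro j
      have := key (j : ℕ) j.isLt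
      rwa [Fin.eta] at this
    intro y
    rcases y with x | x
    · have hx : (Sum.inl x : Fin p ⊕ Fin p) = Sum.inl (π (π.symm x)) := by simp
      rw [hx, hWinl]
      exact haq _
    · rw [hWinr x, c1 x]

/-- strict version of `fin_adj_mono` -/
lemma fin_adj_strictMono {α : Type*} [Preorder α] {u : Fin p → α}
    (h : ∀ (j : ℕ) (hj : j + 1 < p), u ⟨j, by omega⟩ < u ⟨j + 1, hj⟩) :
    StrictMono u := by
  have key : ∀ (n : ℕ) (hn : n < p) (j1 : Fin p), (j1 : ℕ) < n → u j1 < u ⟨n, hn⟩ := by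
    intro n
    induction n with
    | zero => intro hn j1 hj1; omega
    | succ n ih =>
      intro hn j1 hj1
      rcases Nat.lt_or_ge (j1 : ℕ) n with h' | h'
      · exact lt_trans (ih (by omega) j1 h') (h n hn)
      · have : j1 = ⟨n, by omega⟩ := Fin.ext (show (j1 : ℕ) = n by omega)
        rw [this]
        exact h n hn
  intro j1 j2 h12
  have := key (j2 : ℕ) j2.isLt j1 h12
  rwa [Fin.eta] at this

/-- the arithmetic heart: descent bookkeeping versus the lexicographic key -/
lemma adj_arith {a b : Fin p} (hab : a ≠ b) (qa qb : ℕ) (ρa ρb : ℚ)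
    (h0a : 0 < ρa) (h1a : ρa ≤ 1) (h0b : 0 < ρb) (h1b : ρb ≤ 1) :
    (qa + (if (a < b ∧ ρb < ρa) ∨ (b < a ∧ ρb ≤ ρa) then 1 else 0) ≤ qb)
    ↔ (((qa : ℚ) + ρa < (qb : ℚ) + ρb) ∨ (((qa : ℚ) + ρa = (qb : ℚ) + ρb) ∧ a < b)) := by
  rcases lt_or_gt_of_ne hab with hlt | hgt
  · have hnba : ¬ (b < a) := not_lt.mpr (le_of_lt hlt)
    by_cases hρ : ρb < ρa
    · rw [if_pos (Or.inl ⟨hlt, hρ⟩)]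
      constructor
      · intro h
        have h' : (qa : ℚ) + 1 ≤ (qb : ℚ) := by exact_mod_cast h
        left; linarith
      · rintro (h | ⟨h, _⟩)
        · have : (qa : ℚ) < qb := by linarith
          have : qa < qb := by exact_mod_cast this
          omega
        · have : (qa : ℚ) < qb := by linarith
          have : qa < qb := by exact_mod_cast this
          omega
    · push_neg at hρ
      rw [if_neg (by rintro (⟨_, h⟩ | ⟨h, _⟩); exacts [absurd h (not_lt.mpr hρ), hnba h])]
      rw [add_zero]
      constructor
      · intro h
        have h' : (qa : ℚ) ≤ qb := by exact_mod_cast h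
        rcases lt_or_eq_of_le (show (qa : ℚ) + ρa ≤ (qb : ℚ) + ρb by linarith) with h2 | h2
        · exact Or.inl h2
        · exact Or.inr ⟨h2, hlt⟩
      · rintro (h | ⟨h, _⟩)
        · have : (qa : ℚ) < qb + 1 := by linarith
          have : qa < qb + 1 := by exact_mod_cast this
          omega
        · have : (qa : ℚ) < qb + 1 := by linarith
          have : qa < qb + 1 := by exact_mod_cast this
          omega
  · have hnab : ¬ (a < b) := not_lt.mpr (le_of_lt hgt)
    have hnab' : ¬ (a < b) := hnab
    by_cases hρ : ρb ≤ ρa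
    · rw [if_pos (Or.inr ⟨hgt, hρ⟩)]
      constructor
      · intro h
        have h' : (qa : ℚ) + 1 ≤ (qb : ℚ) := by exact_mod_cast h
        left; linarith
      · rintro (h | ⟨_, h⟩)
        · have : (qa : ℚ) < qb := by linarith
          have : qa < qb := by exact_mod_cast this
          omega
        · exact absurd h hnab
    · push_neg at hρ
      rw [if_neg (by rintro (⟨h, _⟩ | ⟨_, h⟩); exacts [hnab h, absurd h (not_le.mpr hρ)])]
      rw [add_zero]
      constructor
      · intro h
        have h' : (qa : ℚ) ≤ qb := by exact_mod_cast h
        left; linarith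
      · rintro (h | ⟨_, h⟩)
        · have : (qa : ℚ) < qb + 1 := by linarith
          have : qa < qb + 1 := by exact_mod_cast this
          omega
        · exact absurd h hnab

section Core

variable {s : Fin p → ℕ} {d : (Fin p ⊕ Fin p) →₀ ℕ}

/-- the sorting key -/
def skey (s : Fin p → ℕ) (d : (Fin p ⊕ Fin p) →₀ ℕ) (x : Fin p) : ℚ ×ₗ Fin p :=
  toLex ((d (Sum.inl x) : ℚ) + (d (Sum.inr x) : ℚ) / (s x : ℚ), x)

lemma skey_inj : Function.Injective (skey s d) := by
  intro a b h
  have := congrArg (fun z : ℚ ×ₗ Fin p => (ofLex z).2) h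
  simpa [skey] using this

lemma skey_lt_iff {a b : Fin p} :
    skey s d a < skey s d b ↔
      ((d (Sum.inl a) : ℚ) + (d (Sum.inr a) : ℚ) / (s a : ℚ) <
        (d (Sum.inl b) : ℚ) + (d (Sum.inr b) : ℚ) / (s b : ℚ)) ∨
      (((d (Sum.inl a) : ℚ) + (d (Sum.inr a) : ℚ) / (s a : ℚ) =
        (d (Sum.inl b) : ℚ) + (d (Sum.inr b) : ℚ) / (s b : ℚ)) ∧ a < b) :=
  Prod.Lex.lt_iff

/-- `π` sorts the keys strictly (defined in a `P`-free context to pin instances) -/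
def SM (s : Fin p → ℕ) (d : (Fin p ⊕ Fin p) →₀ ℕ) (π : Equiv.Perm (Fin p)) : Prop :=
  StrictMono (skey s d ∘ π)

lemma SM_lt {π : Equiv.Perm (Fin p)} (hK : SM s d π) {i j : Fin p}
    (hij : (i : ℕ) < (j : ℕ)) :
    ((d (Sum.inl (π i)) : ℚ) + (d (Sum.inr (π i)) : ℚ) / (s (π i) : ℚ) <
      (d (Sum.inl (π j)) : ℚ) + (d (Sum.inr (π j)) : ℚ) / (s (π j) : ℚ)) ∨
    (((d (Sum.inl (π i)) : ℚ) + (d (Sum.inr (π i)) : ℚ) / (s (π i) : ℚ) =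
      (d (Sum.inl (π j)) : ℚ) + (d (Sum.inr (π j)) : ℚ) / (s (π j) : ℚ)) ∧
      (π i : ℕ) < (π j : ℕ)) := by
  unfold SM at hK
  have h2 := hK (a := i) (b := j) (by omega)
  rw [Function.comp_apply, Function.comp_apply, skey_lt_iff] at h2
  rcases h2 with h | ⟨h, h'⟩
  · exact Or.inl h
  · exact Or.inr ⟨h, by omega⟩

lemma rho_pos (hs : ∀ x, 0 < s x) (hr : ∀ x, 1 ≤ d (Sum.inr x) ∧ d (Sum.inr x) ≤ s x) (x : Fin p) : 0 < (d (Sum.inr x) : ℚ) / (s x : ℚ) := by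
  apply div_pos
  · exact_mod_cast (hr x).1
  · exact_mod_cast hs x

lemma rho_le_one (hs : ∀ x, 0 < s x) (hr : ∀ x, 1 ≤ d (Sum.inr x) ∧ d (Sum.inr x) ≤ s x) (x : Fin p) : (d (Sum.inr x) : ℚ) / (s x : ℚ) ≤ 1 := by
  rw [div_le_one (by exact_mod_cast hs x)]
  exact_mod_cast (hr x).2

lemma D3_mem_iff (hr : ∀ x, 1 ≤ d (Sum.inr x) ∧ d (Sum.inr x) ≤ s x) (π : Equiv.Perm (Fin p)) (j : ℕ) (hj : j + 1 < p) :
    ((j + 1) ∈ D3 s π fun x => d (Sum.inr x) - 1) ↔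
      ((π ⟨j, by omega⟩ < π ⟨j + 1, hj⟩ ∧
          (d (Sum.inr (π ⟨j + 1, hj⟩)) : ℚ) / (s (π ⟨j + 1, hj⟩) : ℚ) <
            (d (Sum.inr (π ⟨j, by omega⟩)) : ℚ) / (s (π ⟨j, by omega⟩) : ℚ)) ∨
        (π ⟨j + 1, hj⟩ < π ⟨j, by omega⟩ ∧
          (d (Sum.inr (π ⟨j + 1, hj⟩)) : ℚ) / (s (π ⟨j + 1, hj⟩) : ℚ) ≤
            (d (Sum.inr (π ⟨j, by omega⟩)) : ℚ) / (s (π ⟨j, by omega⟩) : ℚ))) := by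
  have hcast : ∀ z : Fin p, ((d (Sum.inr z) - 1 + 1 : ℕ) : ℚ) = (d (Sum.inr z) : ℚ) := by
    intro z
    have := (hr z).1
    congr 1
    omega
  rw [D3, D1, Finset.mem_filter, Finset.mem_Icc]
  have hIcc : (1 ≤ j + 1 ∧ j + 1 ≤ p - 1) := ⟨by omega, by omega⟩
  rw [IsDesc]
  constructor
  · rintro ⟨_, h1, h2, hd⟩
    have hidx : (⟨j + 1 - 1, h1⟩ : Fin p) = ⟨j, by omega⟩ := Fin.ext (show j + 1 - 1 = j by omega)
    rw [hidx] at hd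
    rcases hd with ⟨hab, hgt⟩ | ⟨hab, hge⟩
    · left
      refine ⟨hab, ?_⟩
      rw [← hcast, ← hcast]
      exact hgt
    · right
      refine ⟨hab, ?_⟩
      rw [← hcast, ← hcast]
      exact hge
  · intro h
    refine ⟨hIcc, by omega, hj, ?_⟩
    have hidx : (⟨j + 1 - 1, by omega⟩ : Fin p) = (⟨j, by omega⟩ : Fin p) := Fin.ext (show j + 1 - 1 = j by omega)
    rw [hidx]
    rcases h with ⟨hab, hgt⟩ | ⟨hab, hge⟩
    · left
      refine ⟨hab, ?_⟩
      show _ > _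
      rw [hcast, hcast]
      exact hgt
    · right
      refine ⟨hab, ?_⟩
      show _ ≥ _
      rw [hcast, hcast]
      exact hge

lemma tcond_iff_strictMono (hs : ∀ x, 0 < s x) (hr : ∀ x, 1 ≤ d (Sum.inr x) ∧ d (Sum.inr x) ≤ s x) (π : Equiv.Perm (Fin p)) :
    TCond s π (fun x => d (Sum.inr x) - 1) d ↔ SM s d π := by
  rw [TCond]
  unfold SM
  have hfirst : (∀ x : Fin p, d (Sum.inr x) = (d (Sum.inr x) - 1) + 1) := by
    intro x; have := (hr x).1; omega
  rw [iff_true_intro hfirst, true_and]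
  constructor
  · intro h
    apply fin_adj_strictMono
    intro j hj
    have h2 := h j hj
    set a := π ⟨j, by omega⟩
    set b := π ⟨j + 1, hj⟩
    have hab : a ≠ b := fun hc => by
      have := π.injective hc
      simp only [Fin.ext_iff] at this
      omega
    rw [Function.comp_apply, Function.comp_apply, skey_lt_iff]
    rw [← adj_arith hab _ _ _ _ (rho_pos hs hr a) (rho_le_one hs hr a)
      (rho_pos hs hr b) (rho_le_one hs hr b)]
    rwa [if_congr (D3_mem_iff hr π j hj) rfl rfl] at h2
  · intro h j hj
    have h2 := h (show (⟨j, by omega⟩ : Fin p) < ⟨j + 1, hj⟩ by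
      simp [Fin.lt_def])
    set a := π ⟨j, by omega⟩
    set b := π ⟨j + 1, hj⟩
    have hab : a ≠ b := fun hc => by
      have := π.injective hc
      simp only [Fin.ext_iff] at this
      omega
    rw [Function.comp_apply, Function.comp_apply, skey_lt_iff] at h2
    rw [if_congr (D3_mem_iff hr π j hj) rfl rfl]
    exact (adj_arith hab _ _ _ _ (rho_pos hs hr a) (rho_le_one hs hr a)
      (rho_pos hs hr b) (rho_le_one hs hr b)).mpr h2

end Core

section Assemble

variable {s : Fin p → ℕ} {d : (Fin p ⊕ Fin p) →₀ ℕ}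

lemma sort_strictMono : SM s d (Tuple.sort (skey s d)) :=
  (Tuple.monotone_sort (skey s d)).strictMono_of_injective
    (skey_inj.comp (Tuple.sort (skey s d)).injective)

lemma sort_unique {π1 π2 : Equiv.Perm (Fin p)}
    (h1 : SM s d π1) (h2 : SM s d π2) : π1 = π2 := by
  unfold SM at h1 h2
  have hrange : Set.range (skey s d ∘ π1) = Set.range (skey s d ∘ π2) := by
    rw [π1.surjective.range_comp, π2.surjective.range_comp]
  haveI : WellFoundedLT (Fin p) := inferInstance
  have := (StrictMono.range_inj h1 h2).mp hrange
  exact Equiv.ext fun i => skey_inj (congrFun this i)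

lemma ratio_eq (hs : ∀ x, 0 < s x) (x : Fin p) :
    ((s x * d (Sum.inl x) + d (Sum.inr x) : ℕ) : ℚ) / (s x : ℚ) =
      (d (Sum.inl x) : ℚ) + (d (Sum.inr x) : ℚ) / (s x : ℚ) := by
  have hsx : (s x : ℚ) ≠ 0 := by
    exact_mod_cast (hs x).ne'
  push_cast
  field_simp

lemma linext_iff_lhp (P : PartialOrder (Fin p)) (hs : ∀ x, 0 < s x)
    {π₀ : Equiv.Perm (Fin p)} (hK : SM s d π₀) :
    π₀ ∈ LinExt P ↔ IsLHPart P s (fun x => s x * d (Sum.inl x) + d (Sum.inr x)) := by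
  set f₀ : Fin p → ℕ := fun x => s x * d (Sum.inl x) + d (Sum.inr x) with hf₀
  have hv : ∀ x, (f₀ x : ℚ) / (s x : ℚ) =
      (d (Sum.inl x) : ℚ) + (d (Sum.inr x) : ℚ) / (s x : ℚ) := fun x => ratio_eq hs x
  constructor
  · intro hL
    have main : ∀ x y : Fin p, P.lt x y →
        ((f₀ x : ℚ) / (s x : ℚ) < (f₀ y : ℚ) / (s y : ℚ)) ∨
        ((f₀ x : ℚ) / (s x : ℚ) = (f₀ y : ℚ) / (s y : ℚ) ∧ (x : ℕ) < (y : ℕ)) := by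
      intro x y hxy
      have hne : x ≠ y := fun hc => by
        rw [hc] at hxy
        exact (P.lt_iff_le_not_ge y y).mp hxy |>.2 (P.le_refl y)
      have hle : P.le x y := ((P.lt_iff_le_not_ge x y).mp hxy).1
      have hij := hL (π₀.symm x) (π₀.symm y) (by
        rw [Equiv.apply_symm_apply, Equiv.apply_symm_apply]; exact hle)
      have hne' : π₀.symm x ≠ π₀.symm y := fun h => hne (by simpa using congrArg π₀ h)
      have hijn : ((π₀.symm x : Fin p) : ℕ) ≤ ((π₀.symm y : Fin p) : ℕ) := hij
      have hij' : ((π₀.symm x : Fin p) : ℕ) < ((π₀.symm y : Fin p) : ℕ) :=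
        lt_of_le_of_ne hijn (fun hc => hne' (Fin.ext hc))
      have h2 := SM_lt hK hij'
      simp only [Equiv.apply_symm_apply] at h2
      rw [hv, hv]
      exact h2
    constructor
    · intro x y hxy
      rcases main x y hxy with h | ⟨h, _⟩
      · exact le_of_lt h
      · exact le_of_eq h
    · intro x y hxy hyx
      rcases main x y hxy with h | ⟨h, hlab⟩
      · exact h
      · exfalso
        have h' : (y : ℕ) < (x : ℕ) := hyx
        exact lt_asymm hlab h'
  · intro hP i j hle
    by_contra hc
    have hji : (j : ℕ) < (i : ℕ) := by
      have : ¬ ((i : ℕ) ≤ (j : ℕ)) := fun h => hc h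
      omega
    set x := π₀ i
    set y := π₀ j
    have hne : x ≠ y := fun hcc => by
      have := π₀.injective hcc
      subst this
      omega
    have hlt : P.lt x y := (P.lt_iff_le_not_ge x y).mpr
      ⟨hle, fun hyx => hne (P.le_antisymm x y hle hyx)⟩
    have h2 := SM_lt hK hji
    have h1 := hP.1 x y hlt
    rw [hv, hv] at h1
    rcases h2 with h | ⟨h, hlab⟩
    · linarith
    · have h3 := hP.2 x y hlt (show y < x from hlab)
      rw [hv, hv] at h3
      linarith

lemma mem_rhs_bounds (hs : ∀ x, 0 < s x) (f : Fin p → ℕ) (hpos : ∀ x, 0 < f x)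
    (heq : ∀ x, (f x - 1) / s x = d (Sum.inl x) ∧
      f x - s x * ((f x - 1) / s x) = d (Sum.inr x)) :
    ∀ x, (1 ≤ d (Sum.inr x) ∧ d (Sum.inr x) ≤ s x) ∧
      f x = s x * d (Sum.inl x) + d (Sum.inr x) := by
  intro x
  obtain ⟨h1, h2⟩ := heq x
  have hd := Nat.div_add_mod (f x - 1) (s x)
  have hm := Nat.mod_lt (f x - 1) (hs x)
  rw [h1] at hd h2
  have hp := hpos x
  omega

end Assemble

section Final

variable {s : Fin p → ℕ} {d : (Fin p ⊕ Fin p) →₀ ℕ}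

lemma mem_rhs_iff (P : PartialOrder (Fin p)) (hs : ∀ x, 0 < s x)
    (hr : ∀ x, 1 ≤ d (Sum.inr x) ∧ d (Sum.inr x) ≤ s x) (f : Fin p → ℕ) :
    (IsLHPart P s f ∧ (∀ x, 0 < f x) ∧
      ∀ x, (f x - 1) / s x = d (Sum.inl x) ∧
        f x - s x * ((f x - 1) / s x) = d (Sum.inr x)) ↔
    (f = (fun x => s x * d (Sum.inl x) + d (Sum.inr x)) ∧
      IsLHPart P s (fun x => s x * d (Sum.inl x) + d (Sum.inr x))) := by
  constructor
  · rintro ⟨h1, h2, h3⟩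
    have hfe : f = fun x => s x * d (Sum.inl x) + d (Sum.inr x) :=
      funext fun x => (mem_rhs_bounds hs f h2 h3 x).2
    exact ⟨hfe, hfe ▸ h1⟩
  · rintro ⟨rfl, hLH⟩
    refine ⟨hLH, fun x => by
      have := (hr x).1
      exact Nat.lt_of_lt_of_le this (Nat.le_add_left _ _), fun x => ?_⟩
    show ((s x * d (Sum.inl x) + d (Sum.inr x) - 1) / s x = d (Sum.inl x) ∧
      s x * d (Sum.inl x) + d (Sum.inr x) -
        s x * ((s x * d (Sum.inl x) + d (Sum.inr x) - 1) / s x) = d (Sum.inr x))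
    have hdiv : (s x * d (Sum.inl x) + d (Sum.inr x) - 1) / s x = d (Sum.inl x) := by
      rw [show s x * d (Sum.inl x) + d (Sum.inr x) - 1 =
        s x * d (Sum.inl x) + (d (Sum.inr x) - 1) from by have := (hr x).1; omega,
        Nat.mul_add_div (hs x),
        Nat.div_eq_of_lt (show d (Sum.inr x) - 1 < s x from by have := hr x; omega), add_zero]
    refine ⟨hdiv, ?_⟩
    rw [hdiv]
    omega

theorem main_count (P : PartialOrder (Fin p)) (hs : ∀ x, 0 < s x) :
    MvPowerSeries.coeff d
        (∑ τ ∈ LPs P s,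
          yprod (fun x => (τ.2 x : ℕ) + 1) *
            (∏ i ∈ D3 s τ.1 fun x => (τ.2 x : ℕ), xprod τ.1 i) *
            ∏ i : Fin p, (1 - xprod τ.1 (i : ℕ))⁻¹) =
      (Set.ncard {f : Fin p → ℕ | IsLHPart P s f ∧ (∀ x, 0 < f x) ∧
        ∀ x, (f x - 1) / s x = d (Sum.inl x) ∧
          f x - s x * ((f x - 1) / s x) = d (Sum.inr x)} : ℚ) := by
  rw [map_sum]
  rw [Finset.sum_congr rfl fun τ _ => coeff_term s τ.1 (fun x => (τ.2 x : ℕ)) d]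
  by_cases hr : ∀ x, 1 ≤ d (Sum.inr x) ∧ d (Sum.inr x) ≤ s x
  · -- good case
    set π₀ := Tuple.sort (skey s d) with hπ₀
    have hSM : SM s d π₀ := sort_strictMono
    set rr₀ : ∀ x : Fin p, Fin (s x) :=
      fun x => ⟨d (Sum.inr x) - 1, by have := hr x; omega⟩ with hrr₀
    have hiff : ∀ τ ∈ LPs P s,
        (TCond s τ.1 (fun x => (τ.2 x : ℕ)) d ↔
          (τ = (π₀, rr₀) ∧
            IsLHPart P s (fun x => s x * d (Sum.inl x) + d (Sum.inr x)))) := by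
      intro τ hτ
      have hτ' : τ.1 ∈ LinExt P := by
        rw [LPs, Finset.mem_filter] at hτ
        exact hτ.2
      constructor
      · intro hT
        have hfun : (fun x => (τ.2 x : ℕ)) = fun x => d (Sum.inr x) - 1 := by
          funext x
          have h0 : d (Sum.inr x) = (τ.2 x : ℕ) + 1 := hT.1 x
          omega
        rw [hfun] at hT
        have hSMτ := (tcond_iff_strictMono hs hr τ.1).mp hT
        have hπ : τ.1 = π₀ := sort_unique hSMτ hSM
        have hLH := (linext_iff_lhp P hs hSMτ).mp hτ'
        refine ⟨?_, hLH⟩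
        have hr2 : τ.2 = rr₀ := by
          funext x
          apply Fin.ext
          have h : ((τ.2 x : ℕ)) = d (Sum.inr x) - 1 := congrFun hfun x
          show ((τ.2 x : ℕ)) = d (Sum.inr x) - 1
          exact h
        exact Prod.ext hπ hr2
      · rintro ⟨hτ0, hLH⟩
        rw [hτ0]
        exact (tcond_iff_strictMono hs hr π₀).mpr hSM
    rw [Finset.sum_congr rfl fun τ hτ => if_congr (hiff τ hτ) rfl rfl]
    by_cases hC : IsLHPart P s (fun x => s x * d (Sum.inl x) + d (Sum.inr x))
    · rw [Finset.sum_congr rfl fun τ _ => by rw [if_congr (and_iff_left hC) rfl rfl],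
        Finset.sum_ite_eq' (LPs P s) (π₀, rr₀) (fun _ => (1 : ℚ))]
      have hmem : (π₀, rr₀) ∈ LPs P s := by
        rw [LPs, Finset.mem_filter]
        exact ⟨Finset.mem_univ _, (linext_iff_lhp P hs hSM).mpr hC⟩
      rw [if_pos hmem]
      have hset : {f : Fin p → ℕ | IsLHPart P s f ∧ (∀ x, 0 < f x) ∧
          ∀ x, (f x - 1) / s x = d (Sum.inl x) ∧
            f x - s x * ((f x - 1) / s x) = d (Sum.inr x)} =
          {fun x => s x * d (Sum.inl x) + d (Sum.inr x)} := by
        ext f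
        rw [Set.mem_setOf_eq, Set.mem_singleton_iff, mem_rhs_iff P hs hr f]
        exact ⟨fun h => h.1, fun h => ⟨h, h ▸ hC⟩⟩
      rw [hset, Set.ncard_singleton]
      norm_num
    · rw [Finset.sum_eq_zero fun τ _ => by rw [if_neg (fun h => hC h.2)]]
      have hset : {f : Fin p → ℕ | IsLHPart P s f ∧ (∀ x, 0 < f x) ∧
          ∀ x, (f x - 1) / s x = d (Sum.inl x) ∧
            f x - s x * ((f x - 1) / s x) = d (Sum.inr x)} = ∅ := by
        rw [Set.eq_empty_iff_forall_notMem]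
        intro f hf
        rw [Set.mem_setOf_eq, mem_rhs_iff P hs hr f] at hf
        exact hC hf.2
      rw [hset, Set.ncard_empty]
      norm_num
  · -- degenerate case: no valid remainders
    push_neg at hr
    rw [Finset.sum_eq_zero]
    · have hset : {f : Fin p → ℕ | IsLHPart P s f ∧ (∀ x, 0 < f x) ∧
          ∀ x, (f x - 1) / s x = d (Sum.inl x) ∧
            f x - s x * ((f x - 1) / s x) = d (Sum.inr x)} = ∅ := by
        rw [Set.eq_empty_iff_forall_notMem]
        rintro f ⟨h1, h2, h3⟩
        obtain ⟨x0, hx0⟩ := hr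
        obtain ⟨hb1, hb2⟩ := (mem_rhs_bounds hs f h2 h3 x0).1
        have := hx0 hb1
        omega
      rw [hset, Set.ncard_empty]
      norm_num
    · intro τ _
      rw [if_neg]
      rintro ⟨c1, _⟩
      obtain ⟨x0, hx0⟩ := hr
      have hlt := (τ.2 x0).isLt
      have hc1 : d (Sum.inr x0) = (τ.2 x0 : ℕ) + 1 := c1 x0
      have h1 : 1 ≤ d (Sum.inr x0) := by omega
      have := hx0 h1
      omega

end Final


/-- The generating function `G_{(P,s)}(x,y) = ∑_{f ∈ ℤ₊(P,s)} y^{r'(f)} x^{q'(f)}` equals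
`∑_{τ=(π,r) ∈ L(P,s)} y^{r+𝟏} ∏_{i ∈ D₃(τ)} x_{π_{i+1}} ⋯ x_{π_p} / ∏_{i ∈ [p]} (1 - x_{π_i} ⋯ x_{π_p})`.
Here `q'(f)(x) = (f x - 1) / s x` and `r'(f)(x) = f x - s x * q'(f)(x)` give the unique
decomposition `f x = q' * s x + r'` with `0 < r' ≤ s x`. The left-hand side is described
coefficientwise. -/
theorem G_eq_sum_over_colored_linear_extensions {p : ℕ}
    (P : PartialOrder (Fin p)) (s : Fin p → ℕ) (hs : ∀ x, 0 < s x) :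
    ∀ d : (Fin p ⊕ Fin p) →₀ ℕ,
      MvPowerSeries.coeff d
          (∑ τ ∈ LPs P s,
            yprod (fun x => (τ.2 x : ℕ) + 1) *
              (∏ i ∈ D3 s τ.1 fun x => (τ.2 x : ℕ), xprod τ.1 i) *
              ∏ i : Fin p, (1 - xprod τ.1 (i : ℕ))⁻¹) =
        (Set.ncard {f : Fin p → ℕ | IsLHPart P s f ∧ (∀ x, 0 < f x) ∧
          ∀ x, (f x - 1) / s x = d (Sum.inl x) ∧
            f x - s x * ((f x - 1) / s x) = d (Sum.inr x)} : ℚ) := by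
  intro d
  exact main_count P hs
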